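/- Let F1(τ, θ1, θ1', θ2, θ2') = θ2' + θ1² cos(ω2 τ) and F2 ≡ 0, and take p = 1. Then for all (Z0, W0) ∈ ℝ²: 𝒢¹(Z0, W0) = −π (√((10 − 7√2)(2 + √2)) W0 − 8) Z0 / (4 √(2(2 + √2))) and 𝒢²(Z0, W0) = π (√2 W0² − 2 W0² − 16 W0 + 3√2 Z0² − 6 Z0²) / (8 √(2(2 + √2))). -/

import Mathlib

/-!
In the phase `x = ω2 τ` one period `[0, T2]` becomes `[0, 2π]` and the integrands of `𝒢¹, 𝒢²`
become trigonometric polynomials of degree four in `sin x, cos x`. Every monomial with an odd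
power of `cos` integrates to zero over `[0, 2π]` (substitute `u = sin x`, and `sin 0 = sin 2π`),
so only `∫ sin², ∫ cos² = π`, `∫ sin² cos² = π/4` and `∫ cos⁴ = 3π/4` contribute. The closed
forms then follow from `√((10 - 7√2)(2 + √2)) = 2 - √2` and `√(2(2 + √2)) = √2 ω2`.
-/

open Real MeasureTheory intervalIntegral

theorem integral_sin_pow_mul_cos_pow_odd_zero_two_pi (m n : ℕ) :
    ∫ x in 0..2 * π, sin x ^ m * cos x ^ (2 * n + 1) = 0 := by
  simp [integral_sin_pow_mul_cos_pow_odd]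

theorem integral_sin_sq_zero_two_pi : ∫ x in 0..2 * π, sin x ^ 2 = π := by
  simp [integral_sin_sq]

theorem integral_cos_sq_zero_two_pi : ∫ x in 0..2 * π, cos x ^ 2 = π := by
  simp [integral_cos_sq]

theorem integral_sin_sq_mul_cos_sq_zero_two_pi :
    ∫ x in 0..2 * π, sin x ^ 2 * cos x ^ 2 = π / 4 := by
  have h : sin (4 * (2 * π)) = 0 := by
    rw [show 4 * (2 * π) = (8 : ℕ) * π by push_cast; ring, sin_nat_mul_pi]
  simp only [integral_sin_sq_mul_cos_sq, h, mul_zero, sin_zero, sub_self, zero_div, sub_zero]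
  ring

theorem integral_cos_pow_four_zero_two_pi : ∫ x in 0..2 * π, cos x ^ 4 = 3 * π / 4 := by
  have h : ∀ x, cos x ^ 4 = cos x ^ 2 - sin x ^ 2 * cos x ^ 2 := fun x => by
    linear_combination cos x ^ 2 * sin_sq_add_cos_sq x
  simp only [h]
  rw [intervalIntegral.integral_sub (Continuous.intervalIntegrable (by fun_prop) _ _)
    (Continuous.intervalIntegrable (by fun_prop) _ _), integral_cos_sq_zero_two_pi,
    integral_sin_sq_mul_cos_sq_zero_two_pi]
  ring

/-- `F̄1(τ) = orbitForcing (4 + 2 * √2) Z0 W0 (ω2 * τ)`: `F1` along `(A2, B2, C2, D2)` in the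
phase `x = ω2 τ`, with `k` standing for `√(4 + 2√2) ^ 2`. -/
noncomputable def orbitForcing (k Z W x : ℝ) : ℝ :=
  (W * cos x - Z * sin x) + (Z * cos x + W * sin x) ^ 2 / k * cos x

theorem integral_sin_mul_orbitForcing (k Z W : ℝ) :
    ∫ x in 0..2 * π, sin x * orbitForcing k Z W x = π * Z * (W / (2 * k) - 1) := by
  have h : ∀ x, sin x * orbitForcing k Z W x =
      W * (sin x ^ 1 * cos x ^ (2 * 0 + 1)) - Z * sin x ^ 2
      + (Z ^ 2 * (sin x ^ 1 * cos x ^ (2 * 1 + 1)) + 2 * Z * W * (sin x ^ 2 * cos x ^ 2)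
        + W ^ 2 * (sin x ^ 3 * cos x ^ (2 * 0 + 1))) / k := by
    intro x
    rw [orbitForcing]
    ring
  simp only [h]
  simp (disch := exact Continuous.intervalIntegrable (by fun_prop) _ _) only
    [intervalIntegral.integral_add, intervalIntegral.integral_sub,
    intervalIntegral.integral_const_mul, intervalIntegral.integral_div,
    integral_sin_pow_mul_cos_pow_odd_zero_two_pi, integral_sin_sq_zero_two_pi,
    integral_sin_sq_mul_cos_sq_zero_two_pi]
  ring

theorem integral_cos_mul_orbitForcing (k Z W : ℝ) :
    ∫ x in 0..2 * π, cos x * orbitForcing k Z W x = π * (W + (3 * Z ^ 2 + W ^ 2) / (4 * k)) := by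
  have h : ∀ x, cos x * orbitForcing k Z W x =
      W * cos x ^ 2 - Z * (sin x ^ 1 * cos x ^ (2 * 0 + 1))
      + (Z ^ 2 * cos x ^ 4 + 2 * Z * W * (sin x ^ 1 * cos x ^ (2 * 1 + 1))
        + W ^ 2 * (sin x ^ 2 * cos x ^ 2)) / k := by
    intro x
    rw [orbitForcing]
    ring
  simp only [h]
  simp (disch := exact Continuous.intervalIntegrable (by fun_prop) _ _) only
    [intervalIntegral.integral_add, intervalIntegral.integral_sub,
    intervalIntegral.integral_const_mul, intervalIntegral.integral_div,
    integral_sin_pow_mul_cos_pow_odd_zero_two_pi, integral_cos_sq_zero_two_pi,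
    integral_cos_pow_four_zero_two_pi, integral_sin_sq_mul_cos_sq_zero_two_pi]
  ring

theorem integral_comp_mul_zero_two_pi_div {ω : ℝ} (hω : ω ≠ 0) (g : ℝ → ℝ) :
    ∫ τ in 0..2 * π / ω, g (ω * τ) = ω⁻¹ * ∫ x in 0..2 * π, g x := by
  rw [integral_comp_mul_left g hω, mul_zero, mul_div_cancel₀ _ hω, smul_eq_mul]

theorem sqrt_ten_sub_seven_sqrt_two_mul : √((10 - 7 * √2) * (2 + √2)) = 2 - √2 := by
  have h2 : √2 ^ 2 = 2 := sq_sqrt (by norm_num)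
  rw [show (10 - 7 * √2) * (2 + √2) = (2 - √2) ^ 2 by linear_combination (-8 : ℝ) * h2]
  exact sqrt_sq (by nlinarith [sqrt_nonneg 2])

theorem averaged_functions_corollary2_general
    (ω2 T2 : ℝ)
    (hω2 : ω2 = Real.sqrt (2 + Real.sqrt 2))
    (hT2 : T2 = 2 * π / ω2)
    (F1 F2 : ℝ → ℝ → ℝ → ℝ → ℝ → ℝ)
    (hF1 : ∀ τ a b c d, F1 τ a b c d = d + a ^ 2 * cos (ω2 * τ))
    (hF2 : ∀ τ a b c d, F2 τ a b c d = 0)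
    (A2 B2 C2 D2 : ℝ → ℝ → ℝ → ℝ)
    (hA2 : ∀ Z0 W0 τ, A2 Z0 W0 τ =
      -((Z0 * cos (ω2 * τ) + W0 * sin (ω2 * τ)) / Real.sqrt (4 + 2 * Real.sqrt 2)))
    (hD2 : ∀ Z0 W0 τ, D2 Z0 W0 τ = W0 * cos (ω2 * τ) - Z0 * sin (ω2 * τ)) :
    ∀ Z0 W0 : ℝ,
      (∫ τ in (0:ℝ)..(1 * T2), sin (ω2 * τ) *
          (-(Real.sqrt 2 * F1 τ (A2 Z0 W0 τ) (B2 Z0 W0 τ) (C2 Z0 W0 τ) (D2 Z0 W0 τ)) +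
            F2 τ (A2 Z0 W0 τ) (B2 Z0 W0 τ) (C2 Z0 W0 τ) (D2 Z0 W0 τ)))
        = -(π * (Real.sqrt ((10 - 7 * Real.sqrt 2) * (2 + Real.sqrt 2)) * W0 - 8) * Z0 /
            (4 * Real.sqrt (2 * (2 + Real.sqrt 2)))) ∧
      (∫ τ in (0:ℝ)..(1 * T2), cos (ω2 * τ) *
          (-(Real.sqrt 2 * F1 τ (A2 Z0 W0 τ) (B2 Z0 W0 τ) (C2 Z0 W0 τ) (D2 Z0 W0 τ)) +
            F2 τ (A2 Z0 W0 τ) (B2 Z0 W0 τ) (C2 Z0 W0 τ) (D2 Z0 W0 τ)))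
        = π * (Real.sqrt 2 * W0 ^ 2 - 2 * W0 ^ 2 - 16 * W0 +
            3 * Real.sqrt 2 * Z0 ^ 2 - 6 * Z0 ^ 2) /
            (8 * Real.sqrt (2 * (2 + Real.sqrt 2))) := by
  intro Z0 W0
  have hω : ω2 ≠ 0 := by rw [hω2]; positivity
  have h2 : √2 ^ 2 = 2 := sq_sqrt (by norm_num)
  have hF : ∀ τ, -(√2 * F1 τ (A2 Z0 W0 τ) (B2 Z0 W0 τ) (C2 Z0 W0 τ) (D2 Z0 W0 τ)) +
      F2 τ (A2 Z0 W0 τ) (B2 Z0 W0 τ) (C2 Z0 W0 τ) (D2 Z0 W0 τ) =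
      -√2 * orbitForcing (4 + 2 * √2) Z0 W0 (ω2 * τ) := by
    intro τ
    rw [hF1, hF2, hA2, hD2, orbitForcing, neg_sq, div_pow, sq_sqrt (by positivity)]
    ring
  have hden : √(2 * (2 + √2)) = √2 * ω2 := by rw [hω2, sqrt_mul zero_le_two]
  simp only [hF, mul_left_comm _ (-√2), intervalIntegral.integral_const_mul, one_mul, hT2]
  rw [integral_comp_mul_zero_two_pi_div hω (fun x => sin x * orbitForcing _ Z0 W0 x),
    integral_comp_mul_zero_two_pi_div hω (fun x => cos x * orbitForcing _ Z0 W0 x),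
    integral_sin_mul_orbitForcing, integral_cos_mul_orbitForcing,
    sqrt_ten_sub_seven_sqrt_two_mul, hden]
  constructor
  · field_simp
    linear_combination (32 * Z0 - 8 * Z0 * W0 + 16 * √2 * Z0) * h2
  · field_simp
    linear_combination (-128 * W0 - 16 * W0 ^ 2 - 48 * Z0 ^ 2 - 64 * √2 * W0) * h2

/-- The explicit computation of the averaged functions `𝒢¹, 𝒢²` for the
perturbation `F1 = θ2' + θ1² cos(ω2 τ)`, `F2 ≡ 0` with `p = 1`. -/
theorem averaged_functions_corollary2
    (ω2 T2 : ℝ)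
    (hω2 : ω2 = Real.sqrt (2 + Real.sqrt 2))
    (hT2 : T2 = 2 * π / ω2)
    (F1 F2 : ℝ → ℝ → ℝ → ℝ → ℝ → ℝ)
    (hF1 : ∀ τ a b c d, F1 τ a b c d = d + a ^ 2 * cos (ω2 * τ))
    (hF2 : ∀ τ a b c d, F2 τ a b c d = 0)
    (A2 B2 C2 D2 : ℝ → ℝ → ℝ → ℝ)
    (hA2 : ∀ Z0 W0 τ, A2 Z0 W0 τ =
      -((Z0 * cos (ω2 * τ) + W0 * sin (ω2 * τ)) / Real.sqrt (4 + 2 * Real.sqrt 2)))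
    (hB2 : ∀ Z0 W0 τ, B2 Z0 W0 τ =
      (-(W0 * cos (ω2 * τ)) + Z0 * sin (ω2 * τ)) / Real.sqrt 2)
    (hC2 : ∀ Z0 W0 τ, C2 Z0 W0 τ =
      (Z0 * cos (ω2 * τ) + W0 * sin (ω2 * τ)) / Real.sqrt (2 + Real.sqrt 2))
    (hD2 : ∀ Z0 W0 τ, D2 Z0 W0 τ = W0 * cos (ω2 * τ) - Z0 * sin (ω2 * τ)) :
    ∀ Z0 W0 : ℝ,
      (∫ τ in (0:ℝ)..(1 * T2), sin (ω2 * τ) *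
          (-(Real.sqrt 2 * F1 τ (A2 Z0 W0 τ) (B2 Z0 W0 τ) (C2 Z0 W0 τ) (D2 Z0 W0 τ)) +
            F2 τ (A2 Z0 W0 τ) (B2 Z0 W0 τ) (C2 Z0 W0 τ) (D2 Z0 W0 τ)))
        = -(π * (Real.sqrt ((10 - 7 * Real.sqrt 2) * (2 + Real.sqrt 2)) * W0 - 8) * Z0 /
            (4 * Real.sqrt (2 * (2 + Real.sqrt 2)))) ∧
      (∫ τ in (0:ℝ)..(1 * T2), cos (ω2 * τ) *
          (-(Real.sqrt 2 * F1 τ (A2 Z0 W0 τ) (B2 Z0 W0 τ) (C2 Z0 W0 τ) (D2 Z0 W0 τ)) +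
            F2 τ (A2 Z0 W0 τ) (B2 Z0 W0 τ) (C2 Z0 W0 τ) (D2 Z0 W0 τ)))
        = π * (Real.sqrt 2 * W0 ^ 2 - 2 * W0 ^ 2 - 16 * W0 +
            3 * Real.sqrt 2 * Z0 ^ 2 - 6 * Z0 ^ 2) /
            (8 * Real.sqrt (2 * (2 + Real.sqrt 2))) :=
  averaged_functions_corollary2_general ω2 T2 hω2 hT2 F1 F2 hF1 hF2 A2 B2 C2 D2 hA2 hD2
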